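/- A finite group G satisfies c(G) = |G| if and only if G is an elementary abelian 2-group, where c(G) is the number of cyclic subgroups of G (including the trivial subgroup). Moreover, c(G) ≤ |G| always holds. -/
import Mathlib

lemma zpowers_isCyclic' {G : Type*} [Group G] (x : G) : IsCyclic (Subgroup.zpowers x) := by
  refine ⟨⟨⟨x, Subgroup.mem_zpowers x⟩, ?_⟩⟩
  rintro ⟨y, n, rfl⟩
  exact ⟨n, Subtype.ext (by push_cast; rfl)⟩

lemma zpowers_surj {G : Type*} [Group G] :
    Function.Surjective (fun x : G => (⟨Subgroup.zpowers x, zpowers_isCyclic' x⟩ :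
      {H : Subgroup G // IsCyclic H})) := by
  rintro ⟨H, hH⟩
  obtain ⟨⟨g, hg⟩, hgen⟩ := IsCyclic.exists_generator (α := H)
  refine ⟨g, Subtype.ext (le_antisymm (Subgroup.zpowers_le.mpr hg) fun h hh => ?_)⟩
  obtain ⟨n, hn⟩ := hgen ⟨h, hh⟩
  exact ⟨n, congrArg Subtype.val hn⟩

theorem cyclic_count_le_card_iff_elementary_abelian_two (G : Type*) [Group G] [Fintype G] :
    Nat.card {H : Subgroup G // IsCyclic H} ≤ Nat.card G ∧
      (Nat.card {H : Subgroup G // IsCyclic H} = Nat.card G ↔ ∀ x : G, x ^ 2 = 1) := by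
  set f := fun x : G => (⟨Subgroup.zpowers x, zpowers_isCyclic' x⟩ :
      {H : Subgroup G // IsCyclic H}) with hf
  have hs : Function.Surjective f := zpowers_surj
  refine ⟨Nat.card_le_card_of_surjective f hs, ?_, ?_⟩
  · -- equality → elementary abelian 2
    intro hcard x
    have hinj : Function.Injective f := by
      exact ((Nat.bijective_iff_surjective_and_card f).mpr ⟨hs, hcard.symm⟩).injective
    have h1 : f x⁻¹ = f x := by
      simp only [hf]
      exact Subtype.ext (Subgroup.zpowers_inv)
    have hxx := hinj h1
    rw [pow_two]
    nth_rewrite 1 [← hxx]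
    exact inv_mul_cancel x
  · -- elementary abelian 2 → equality
    intro h2
    have hinj : Function.Injective f := by
      intro x y hxy
      have hxy' : Subgroup.zpowers x = Subgroup.zpowers y := congrArg Subtype.val hxy
      have hx2 : x⁻¹ = x := by
        rw [← mul_eq_one_iff_inv_eq, ← pow_two]; exact h2 x
      have hy2 : y⁻¹ = y := by
        rw [← mul_eq_one_iff_inv_eq, ← pow_two]; exact h2 y
      have hy : y ∈ Subgroup.zpowers x := hxy' ▸ Subgroup.mem_zpowers y
      have hx : x ∈ Subgroup.zpowers y := hxy'.symm ▸ Subgroup.mem_zpowers x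
      obtain ⟨n, hn⟩ := hy
      obtain ⟨m, hm⟩ := hx
      simp only at hn hm
      -- x^n = y with x^2 = 1 means y ∈ {1, x}
      have hox : orderOf x ∣ 2 := orderOf_dvd_of_pow_eq_one (h2 x)
      have hoy : orderOf y ∣ 2 := orderOf_dvd_of_pow_eq_one (h2 y)
      -- y = x^n : either n even (y=1) or odd (y=x)
      have hxeven : x ^ (2 : ℤ) = 1 := by
        have := h2 x; push_cast [zpow_two]; rw [← pow_two]; exact this
      have key : ∀ k : ℤ, x ^ k = 1 ∨ x ^ k = x := by
        intro k
        rcases Int.even_or_odd k with ⟨c, hc⟩ | ⟨c, hc⟩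
        · left
          rw [hc, ← two_mul, zpow_mul, hxeven, one_zpow]
        · right
          rw [hc, zpow_add, zpow_mul, hxeven, one_zpow, one_mul, zpow_one]
      rcases key n with h | h
      · -- y = 1, then x ∈ zpowers 1 = ⊥ so x = 1
        have hy1 : y = 1 := by rw [← hn, h]
        subst hy1
        have hx1 : x = 1 := by simpa [Subgroup.zpowers_one_eq_bot] using hm.symm
        rw [hx1]
      · rw [← hn, h]
    have : Function.Bijective f := ⟨hinj, hs⟩
    exact (Nat.card_eq_of_bijective f this).symm
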